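/- Let H be a multigraph whose edge set is the disjoint union of two edge-disjoint cycles C1 and C2 that share at least three vertices. Then c(H) = 2 and ν(H) ≥ 3. -/

import Mathlib

open scoped Classical

/-- A finite multigraph without loops: a vertex type, an edge type, and an
incidence map assigning to each edge an unordered pair of distinct vertices. -/
structure MGraph where
  V : Type
  E : Type
  finV : Finite V
  finE : Finite E
  ends : E → Sym2 V
  noLoop : ∀ e, ¬ (ends e).IsDiag

namespace MGraph

variable (G : MGraph)

/-- Degree of a vertex counting only edges in the edge set `F`. -/
noncomputable def degOn (F : Set G.E) (v : G.V) : ℕ := {e | e ∈ F ∧ v ∈ G.ends e}.ncard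

/-- Degree of a vertex. -/
noncomputable def deg (v : G.V) : ℕ := G.degOn Set.univ v

/-- Adjacency using only edges from `F`. -/
def AdjOn (F : Set G.E) (a b : G.V) : Prop := ∃ e ∈ F, G.ends e = s(a, b)

/-- Reachability using only edges from `F`. -/
def ReachOn (F : Set G.E) : G.V → G.V → Prop := Relation.ReflTransGen (G.AdjOn F)

/-- Connectivity of a multigraph. -/
def Connected : Prop := Nonempty G.V ∧ ∀ a b : G.V, G.ReachOn Set.univ a b

/-- A set of edges forms a cycle: it is nonempty, every vertex has degree 0 or 2
in it, and any two of its endpoints are joined by a path inside it. -/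
def IsCycle (C : Set G.E) : Prop :=
  C.Nonempty ∧ (∀ v, G.degOn C v = 0 ∨ G.degOn C v = 2) ∧
    ∀ e ∈ C, ∀ f ∈ C, ∀ a b : G.V, a ∈ G.ends e → b ∈ G.ends f → G.ReachOn C a b

/-- A cycle decomposition of the edge set `F`: a set of cycles inside `F` such
that every edge of `F` lies in exactly one of them. -/
def IsCycleDecompOn (F : Set G.E) (D : Set (Set G.E)) : Prop :=
  (∀ C ∈ D, G.IsCycle C ∧ C ⊆ F) ∧ ∀ e ∈ F, ∃! C, C ∈ D ∧ e ∈ C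

/-- A cycle decomposition of the graph. -/
def IsCycleDecomp (D : Set (Set G.E)) : Prop := G.IsCycleDecompOn Set.univ D

/-- Minimum number of cycles in a cycle decomposition of `F`. -/
noncomputable def cOn (F : Set G.E) : ℕ :=
  sInf {n | ∃ D, G.IsCycleDecompOn F D ∧ D.ncard = n}

/-- Maximum number of cycles in a cycle decomposition of `F`. -/
noncomputable def nuOn (F : Set G.E) : ℕ :=
  sSup {n | ∃ D, G.IsCycleDecompOn F D ∧ D.ncard = n}

/-- Minimum cycle number. -/
noncomputable def c : ℕ := G.cOn Set.univ

/-- Maximum cycle number. -/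
noncomputable def nu : ℕ := G.nuOn Set.univ

/-- A multigraph is Eulerian if it admits a closed walk traversing every edge
exactly once. -/
def IsEulerian : Prop :=
  ∃ (vs : List G.V) (es : List G.E),
    vs.length = es.length + 1 ∧
    (∀ (i : ℕ) (e : G.E) (a b : G.V), es[i]? = some e → vs[i]? = some a →
      vs[i + 1]? = some b → G.ends e = s(a, b)) ∧
    vs.head? = vs.getLast? ∧ es.Nodup ∧ ∀ e : G.E, e ∈ es

/-- A cut-edge (bridge): its endpoints are disconnected after its removal. -/
def IsBridge (e : G.E) : Prop :=
  ∃ a b, G.ends e = s(a, b) ∧ ¬ G.ReachOn {e}ᶜ a b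

/-- 2-edge-connectivity: connected and without cut-edges. -/
def TwoEdgeConnected : Prop := G.Connected ∧ ∀ e, ¬ G.IsBridge e

/-- Reachability avoiding a vertex. -/
def ReachAvoid (v : G.V) (a b : G.V) : Prop :=
  Relation.ReflTransGen (fun x y => x ≠ v ∧ y ≠ v ∧ G.AdjOn Set.univ x y) a b

/-- A cut-vertex: two vertices in the same component get separated by its removal. -/
def IsCutVertex (v : G.V) : Prop :=
  ∃ a b, a ≠ v ∧ b ≠ v ∧ G.ReachOn Set.univ a b ∧ ¬ G.ReachAvoid v a b

/-- Biconnected: connected, at least two vertices, and without cut-vertices. -/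
def Biconnected : Prop :=
  G.Connected ∧ 2 ≤ Nat.card G.V ∧ ∀ v, ¬ G.IsCutVertex v

/-- The vertices covered by a set of edges. -/
def VertexSetOf (C : Set G.E) : Set G.V := {v | ∃ e ∈ C, v ∈ G.ends e}

/-- No two edge-disjoint cycles share more than two vertices. -/
def NoTwoCyclesShareThree : Prop :=
  ∀ C1 C2 : Set G.E, G.IsCycle C1 → G.IsCycle C2 → Disjoint C1 C2 →
    (G.VertexSetOf C1 ∩ G.VertexSetOf C2).ncard ≤ 2

/-- An Eulerian multiedge: two vertices joined by an even positive number of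
parallel edges. -/
def IsEulerianMultiedge : Prop :=
  Nat.card G.V = 2 ∧ 0 < Nat.card G.E ∧ Even (Nat.card G.E)

end MGraph

/-- Isomorphism of multigraphs. -/
structure MIso (G H : MGraph) where
  vEquiv : G.V ≃ H.V
  eEquiv : G.E ≃ H.E
  ends_eq : ∀ e, H.ends (eEquiv e) = (G.ends e).map vEquiv

namespace MGraph

/-- Vertex-identification: glue `u1 ∈ V(G1)` with `u2 ∈ V(G2)`. -/
noncomputable def vertexIdent (G1 G2 : MGraph) (u1 : G1.V) (u2 : G2.V) : MGraph where
  V := G1.V ⊕ {v : G2.V // v ≠ u2}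
  E := G1.E ⊕ G2.E
  finV := by have := G1.finV; have := G2.finV; infer_instance
  finE := by have := G1.finE; have := G2.finE; infer_instance
  ends := fun e =>
    match e with
    | Sum.inl e => (G1.ends e).map Sum.inl
    | Sum.inr e => (G2.ends e).map
        (fun v => if h : v = u2 then Sum.inl u1 else Sum.inr ⟨v, h⟩)
  noLoop := by
    rintro (e | e) h
    · exact G1.noLoop e ((Sym2.isDiag_map Sum.inl_injective).mp h)
    · refine G2.noLoop e ((Sym2.isDiag_map ?_).mp h)
      intro a b hab
      by_cases ha : a = u2 <;> by_cases hb : b = u2 <;>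
        simp [ha, hb] at hab ⊢ <;> simp_all

/-- Edge-identification: delete `e1` and `e2` (with endpoints `u1, v1` resp.
`u2, v2`) and add the new edges `u1u2` and `v1v2`. -/
def edgeIdent (G1 G2 : MGraph) (e1 : G1.E) (e2 : G2.E)
    (u1 v1 : G1.V) (u2 v2 : G2.V) : MGraph where
  V := G1.V ⊕ G2.V
  E := {e : G1.E // e ≠ e1} ⊕ {e : G2.E // e ≠ e2} ⊕ Bool
  finV := by have := G1.finV; have := G2.finV; infer_instance
  finE := by have := G1.finE; have := G2.finE; infer_instance
  ends := fun e =>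
    match e with
    | Sum.inl e => (G1.ends e.1).map Sum.inl
    | Sum.inr (Sum.inl e) => (G2.ends e.1).map Sum.inr
    | Sum.inr (Sum.inr true) => s(Sum.inl u1, Sum.inr u2)
    | Sum.inr (Sum.inr false) => s(Sum.inl v1, Sum.inr v2)
  noLoop := by
    rintro (e | e | b) h
    · exact G1.noLoop e.1 ((Sym2.isDiag_map Sum.inl_injective).mp h)
    · exact G2.noLoop e.1 ((Sym2.isDiag_map Sum.inr_injective).mp h)
    · cases b <;> simp [Sym2.mk_isDiag_iff] at h

/-- Vertex-edge-identification: identify `v1` with `v2`, delete `e1 = u1v1`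
and `e2 = u2v2`, and add a new edge `u1u2`. -/
noncomputable def vertexEdgeIdent (G1 G2 : MGraph) (e1 : G1.E) (e2 : G2.E)
    (u1 v1 : G1.V) (u2 v2 : G2.V) (h2 : G2.ends e2 = s(u2, v2)) : MGraph where
  V := G1.V ⊕ {w : G2.V // w ≠ v2}
  E := {e : G1.E // e ≠ e1} ⊕ {e : G2.E // e ≠ e2} ⊕ Unit
  finV := by have := G1.finV; have := G2.finV; infer_instance
  finE := by have := G1.finE; have := G2.finE; infer_instance
  ends := fun e =>
    match e with
    | Sum.inl e => (G1.ends e.1).map Sum.inl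
    | Sum.inr (Sum.inl e) => (G2.ends e.1).map
        (fun w => if h : w = v2 then Sum.inl v1 else Sum.inr ⟨w, h⟩)
    | Sum.inr (Sum.inr _) =>
        s(Sum.inl u1, Sum.inr ⟨u2, fun h =>
          G2.noLoop e2 (by rw [h2, h]; exact Sym2.mk_isDiag_iff.mpr rfl)⟩)
  noLoop := by
    rintro (e | e | u) h
    · exact G1.noLoop e.1 ((Sym2.isDiag_map Sum.inl_injective).mp h)
    · refine G2.noLoop e.1 ((Sym2.isDiag_map ?_).mp h)
      intro a b hab
      by_cases ha : a = v2 <;> by_cases hb : b = v2 <;>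
        simp [ha, hb] at hab ⊢ <;> simp_all
    · simp [Sym2.mk_isDiag_iff] at h

/-- Delete an edge from a multigraph. -/
def deleteEdge (G : MGraph) (e : G.E) : MGraph where
  V := G.V
  E := {f : G.E // f ≠ e}
  finV := G.finV
  finE := by have := G.finE; infer_instance
  ends := fun f => G.ends f.1
  noLoop := fun f => G.noLoop f.1

/-- `Sym2.pmap`-style map into a subtype. -/
noncomputable def sym2Pmap {α β : Type} {p : α → Prop} (f : ∀ a, p a → β)
    (s : Sym2 α) (h : ∀ a ∈ s, p a) : Sym2 β :=
  let z := Classical.choose (Quot.exists_rep s)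
  s(f z.1 (h z.1 (by
      have hz : Quot.mk _ z = s := Classical.choose_spec (Quot.exists_rep s)
      rw [← hz]; exact Sym2.mem_mk_left z.1 z.2)),
    f z.2 (h z.2 (by
      have hz : Quot.mk _ z = s := Classical.choose_spec (Quot.exists_rep s)
      rw [← hz]; exact Sym2.mem_mk_right z.1 z.2)))

/-- Delete a vertex (and all incident edges) from a multigraph. -/
noncomputable def deleteVertex (G : MGraph) (v : G.V) : MGraph where
  V := {w : G.V // w ≠ v}
  E := {e : G.E // v ∉ G.ends e}
  finV := by have := G.finV; infer_instance
  finE := by have := G.finE; infer_instance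
  ends := fun e => sym2Pmap (fun a ha => (⟨a, ha⟩ : {w : G.V // w ≠ v}))
    (G.ends e.1) (fun a ha hav => e.2 (hav ▸ ha))
  noLoop := by
    rintro ⟨e, he⟩ h
    apply G.noLoop e
    unfold sym2Pmap at h
    have hz : Quot.mk _ (Classical.choose (Quot.exists_rep (G.ends e))) = G.ends e :=
      Classical.choose_spec (Quot.exists_rep (G.ends e))
    rw [Sym2.mk_isDiag_iff] at h
    have : (Classical.choose (Quot.exists_rep (G.ends e))).1 =
        (Classical.choose (Quot.exists_rep (G.ends e))).2 := congrArg Subtype.val h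
    rw [← hz]
    exact Sym2.mk_isDiag_iff.mpr this

end MGraph

/-- A tree decomposition of a multigraph: a tree of bags covering all vertices
and edges such that the bags containing a given vertex form a subtree. -/
structure TreeDecomp (G : MGraph) where
  ι : Type
  t : SimpleGraph ι
  isTree : t.IsTree
  bag : ι → Set G.V
  covers_vertex : ∀ v : G.V, ∃ i, v ∈ bag i
  covers_edge : ∀ e : G.E, ∃ i, ∀ v ∈ G.ends e, v ∈ bag i
  bags_connected : ∀ v : G.V, (SimpleGraph.induce {i | v ∈ bag i} t).Connected

namespace MGraph

/-- The graph has treewidth at most `k`. -/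
def twLE (G : MGraph) (k : ℕ) : Prop :=
  ∃ T : TreeDecomp G, ∀ i, (T.bag i).ncard ≤ k + 1

/-- Treewidth of a multigraph. -/
noncomputable def treewidth (G : MGraph) : ℕ := sInf {k | G.twLE k}

/-- The closed necklace on `n ≥ 2` vertices: a cycle of length `n` with all
of its edges doubled. -/
def necklace (n : ℕ) (hn : 2 ≤ n) : MGraph where
  V := ZMod n
  E := ZMod n × Bool
  finV := by have : NeZero n := ⟨by omega⟩; infer_instance
  finE := by have : NeZero n := ⟨by omega⟩; infer_instance
  ends := fun e => s(e.1, e.1 + 1)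
  noLoop := by
    have : Fact (1 < n) := ⟨hn⟩
    intro e h
    rw [Sym2.mk_isDiag_iff] at h
    exact one_ne_zero (left_eq_add.mp h)

end MGraph

/-!
The pair `{C1, C2}` is a decomposition, and none has fewer cycles: a shared vertex has degree 4,
while a cycle uses at most two edges at any vertex. For `ν ≥ 3` take three shared vertices
`x, y, z`. Each of `C1`, `C2` is a closed trail through all its vertices, so it contains an
`x`–`y` trail avoiding `z`; together these form a closed trail `X` missing `z`. All degrees are
even in `X` and in its complement, so both decompose into cycles (Veblen); `X` needs at least one
cycle, and the complement at least two, since `z` still has degree 4 there.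
-/

namespace MGraph

instance (G : MGraph) : Finite G.V := G.finV

instance (G : MGraph) : Finite G.E := G.finE

variable {G : MGraph}

section Degree

lemma degOn_union {A B : Set G.E} (hAB : Disjoint A B) (v : G.V) :
    G.degOn (A ∪ B) v = G.degOn A v + G.degOn B v := by
  rw [degOn, degOn, degOn, ← Set.ncard_union_eq]
  · congr 1
    ext e
    simp only [Set.mem_union, Set.mem_ofPred_eq]
    tauto
  · exact Set.disjoint_left.mpr fun e he he' => Set.disjoint_left.mp hAB he.1 he'.1

lemma degOn_eq_zero {S : Set G.E} {v : G.V} (h : ∀ e ∈ S, v ∉ G.ends e) :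
    G.degOn S v = 0 := by
  rw [degOn, Set.ncard_eq_zero]
  exact Set.eq_empty_of_forall_notMem fun e (he : e ∈ S ∧ v ∈ G.ends e) => h e he.1 he.2

lemma degOn_mono {S T : Set G.E} (hST : S ⊆ T) (v : G.V) : G.degOn S v ≤ G.degOn T v :=
  Set.ncard_le_ncard fun _ he => ⟨hST he.1, he.2⟩

lemma degOn_insert {S : Set G.E} {e : G.E} (he : e ∉ S) (v : G.V) :
    G.degOn (insert e S) v = G.degOn S v + if v ∈ G.ends e then 1 else 0 := by
  rw [Set.insert_eq, Set.union_comm, degOn_union (Set.disjoint_singleton_right.mpr he)]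
  congr 1
  split_ifs with hv
  · rw [degOn, show {f | f ∈ ({e} : Set G.E) ∧ v ∈ G.ends f} = {e} by
      ext f; exact ⟨fun h => h.1, fun h => ⟨h, h ▸ hv⟩⟩]
    exact Set.ncard_singleton e
  · exact degOn_eq_zero (by simpa using hv)

lemma mem_vertexSetOf_iff_degOn_pos {S : Set G.E} {v : G.V} :
    v ∈ G.VertexSetOf S ↔ 0 < G.degOn S v := by
  rw [degOn, Set.ncard_pos]
  rfl

lemma IsCycle.degOn_eq_two {C : Set G.E} (hC : G.IsCycle C) {v : G.V}
    (hv : v ∈ G.VertexSetOf C) : G.degOn C v = 2 :=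
  (hC.2.1 v).resolve_left (mem_vertexSetOf_iff_degOn_pos.mp hv).ne'

lemma IsCycle.even_degOn {C : Set G.E} (hC : G.IsCycle C) (v : G.V) :
    Even (G.degOn C v) := by
  rcases hC.2.1 v with h | h <;> rw [h] <;> decide

end Degree

/-- `G.Trail F a c vs es`: a trail in `F` from `a` to `c` through the edges `es`, where
`vs` lists the vertices reached after each edge (so it ends with `c`, and omits `a`). -/
inductive Trail (F : Set G.E) : G.V → G.V → List G.V → List G.E → Prop
  | nil (v : G.V) : Trail F v v [] []
  | cons {a b c : G.V} {vs : List G.V} {es : List G.E} {e : G.E} :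
      e ∈ F → G.ends e = s(a, b) → e ∉ es → Trail F b c vs es →
      Trail F a c (b :: vs) (e :: es)

lemma AdjOn.symm {F : Set G.E} {x y : G.V} (h : G.AdjOn F x y) : G.AdjOn F y x := by
  obtain ⟨e, he, hxy⟩ := h
  exact ⟨e, he, hxy.trans Sym2.eq_swap⟩

lemma reachOn_symm {F : Set G.E} {x y : G.V} (h : G.ReachOn F x y) : G.ReachOn F y x := by
  induction h with
  | refl => exact Relation.ReflTransGen.refl
  | tail _ hyz ih => exact Relation.ReflTransGen.head hyz.symm ih

lemma reachOn_mono {F F' : Set G.E} (hFF' : F ⊆ F') {x y : G.V} (h : G.ReachOn F x y) :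
    G.ReachOn F' x y :=
  Relation.ReflTransGen.mono (p := G.AdjOn F')
    (fun _ _ ⟨e, he, hends⟩ => ⟨e, hFF' he, hends⟩) x y h

namespace Trail

variable {F : Set G.E} {a c : G.V} {vs : List G.V} {es : List G.E}

lemma subset (h : G.Trail F a c vs es) : ∀ e ∈ es, e ∈ F := by
  induction h with
  | nil => simp
  | cons hF _ _ _ ih => exact List.forall_mem_cons.mpr ⟨hF, ih⟩

lemma mono {F' : Set G.E} (hFF' : F ⊆ F') (h : G.Trail F a c vs es) :
    G.Trail F' a c vs es := by
  induction h with
  | nil v => exact nil v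
  | cons hF he hne _ ih => exact cons (hFF' hF) he hne ih

lemma ends_subset (h : G.Trail F a c vs es) : ∀ e ∈ es, ∀ x ∈ G.ends e, x ∈ a :: vs := by
  induction h with
  | nil => simp
  | cons _ he _ _ ih =>
    rintro f hf x hx
    rcases List.mem_cons.mp hf with rfl | hf
    · rw [he, Sym2.mem_iff] at hx
      rcases hx with rfl | rfl <;> simp
    · exact List.mem_cons_of_mem _ (ih f hf x hx)

lemma notMem_ends (h : G.Trail F a c vs es) {w : G.V} (hw : w ∉ a :: vs) :
    ∀ e ∈ es, w ∉ G.ends e :=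
  fun e he hwe => hw (h.ends_subset e he w hwe)

lemma end_mem_cons (h : G.Trail F a c vs es) : c ∈ a :: vs := by
  induction h with
  | nil => exact List.mem_singleton_self _
  | cons _ _ _ _ ih => exact List.mem_cons_of_mem _ ih

lemma end_mem (h : G.Trail F a c vs es) (hes : es ≠ []) : c ∈ vs := by
  cases h with
  | nil => exact absurd rfl hes
  | cons _ _ _ h' => exact h'.end_mem_cons

lemma ne_nil_of_ne (h : G.Trail F a c vs es) (hac : a ≠ c) : es ≠ [] := by
  rintro rfl
  cases h
  exact hac rfl

lemma append {b : G.V} {vs' : List G.V} {es' : List G.E} (h : G.Trail F a b vs es)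
    (h' : G.Trail F b c vs' es') (hdisj : ∀ e ∈ es, e ∉ es') :
    G.Trail F a c (vs ++ vs') (es ++ es') := by
  induction h with
  | nil => exact h'
  | cons hF he hne _ ih =>
    refine cons hF he (fun hmem => ?_) (ih h' fun e he' => hdisj e (List.mem_cons_of_mem _ he'))
    exact (List.mem_append.mp hmem).elim hne (hdisj _ List.mem_cons_self)

lemma exists_reverse (h : G.Trail F a c vs es) : ∃ vs', G.Trail F c a vs' es.reverse := by
  induction h with
  | nil v => exact ⟨[], nil v⟩
  | @cons a b c vs es e hF he hne _ ih =>
    obtain ⟨vs', h'⟩ := ih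
    have hedge : G.Trail F b a [a] [e] :=
      cons hF (he.trans Sym2.eq_swap) List.not_mem_nil (nil a)
    refine ⟨vs' ++ [a], ?_⟩
    rw [List.reverse_cons]
    exact h'.append hedge fun f hf hfe => hne (List.mem_singleton.mp hfe ▸ List.mem_reverse.mp hf)

lemma exists_split (h : G.Trail F a c vs es) {x : G.V} (hx : x ∈ vs) :
    ∃ vs₁ vs₂ es₁ es₂, vs = vs₁ ++ vs₂ ∧ es = es₁ ++ es₂ ∧ es₁ ≠ [] ∧
      G.Trail F a x vs₁ es₁ ∧ G.Trail F x c vs₂ es₂ := by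
  induction h with
  | nil => simp at hx
  | @cons a b c vs es e hF he hne h' ih =>
    by_cases hxb : x = b
    · subst hxb
      exact ⟨[x], vs, [e], es, rfl, rfl, List.cons_ne_nil _ _,
        cons hF he List.not_mem_nil (nil x), h'⟩
    · obtain ⟨vs₁, vs₂, es₁, es₂, rfl, rfl, -, h₁, h₂⟩ :=
        ih ((List.mem_cons.mp hx).resolve_left hxb)
      exact ⟨b :: vs₁, vs₂, e :: es₁, es₂, rfl, rfl, List.cons_ne_nil _ _,
        cons hF he (fun he' => hne (List.mem_append_left _ he')) h₁, h₂⟩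

/-- Each visit of an intermediate vertex uses two edges of the trail, and no edge is a loop. -/
lemma degOn_add_ite (h : G.Trail F a c vs es) (v : G.V) :
    G.degOn {e | e ∈ es} v + (if v = c then 1 else 0) =
      (if v = a then 1 else 0) + 2 * vs.count v := by
  induction h with
  | nil => simp [degOn]
  | @cons a b c vs es e _ he hne h' ih =>
    have hab : a ≠ b := fun hab => G.noLoop e (by rw [he, hab]; exact Sym2.mk_isDiag_iff.mpr rfl)
    have hset : {f | f ∈ e :: es} = insert e {f | f ∈ es} := by ext; simp
    rw [hset, degOn_insert hne, List.count_cons, he]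
    simp only [Sym2.mem_iff, beq_iff_eq]
    rcases eq_or_ne v a with rfl | hva
    · have hvb : v ≠ b := hab
      simp only [true_or, if_true, hvb, Ne.symm hvb, if_false] at ih ⊢
      omega
    · by_cases hvb : b = v
      · simp only [hva, hvb, or_true, if_true, if_false] at ih ⊢
        omega
      · simp only [hva, Ne.symm hvb, hvb, or_false, if_false] at ih ⊢
        omega

lemma degOn_eq_two_mul_count (h : G.Trail F a a vs es) (v : G.V) :
    G.degOn {e | e ∈ es} v = 2 * vs.count v := by
  have := h.degOn_add_ite v
  split_ifs at this <;> omega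

lemma even_degOn (h : G.Trail F a a vs es) (v : G.V) : Even (G.degOn {e | e ∈ es} v) := by
  rw [h.degOn_eq_two_mul_count]
  exact even_two_mul _

lemma exists_closed_of_not_nodup (h : G.Trail F a c vs es) (hvs : ¬ vs.Nodup) :
    ∃ x vs' es', G.Trail F x x vs' es' ∧ es' ≠ [] ∧ es'.length < es.length := by
  induction h with
  | nil => exact absurd List.nodup_nil hvs
  | @cons a b c vs es e _ _ _ h' ih =>
    rw [List.nodup_cons, not_and_or, not_not] at hvs
    rcases hvs with hb | hvs
    · obtain ⟨vs₁, -, es₁, es₂, -, rfl, hes₁, h₁, -⟩ := h'.exists_split hb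
      exact ⟨b, vs₁, es₁, h₁, hes₁, by simp only [List.length_cons, List.length_append]; omega⟩
    · obtain ⟨x, vs', es', h'', hes', hlt⟩ := ih hvs
      exact ⟨x, vs', es', h'', hes', by simp only [List.length_cons]; omega⟩

lemma reachOn (h : G.Trail F a c vs es) : ∀ x ∈ a :: vs, G.ReachOn {e | e ∈ es} a x := by
  induction h with
  | nil =>
    rintro x (_ | ⟨_, ⟨⟩⟩)
    exact Relation.ReflTransGen.refl
  | @cons a b c vs es e _ he _ _ ih =>
    rintro x (_ | ⟨_, hx⟩)
    · exact Relation.ReflTransGen.refl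
    · exact Relation.ReflTransGen.head ⟨e, List.mem_cons_self, he⟩
        (reachOn_mono (fun f hf => List.mem_cons_of_mem _ hf) (ih x hx))

lemma isCycle (h : G.Trail F a a vs es) (hes : es ≠ []) (hvs : vs.Nodup) :
    G.IsCycle {e | e ∈ es} := by
  refine ⟨List.exists_mem_of_ne_nil es hes, fun v => ?_, ?_⟩
  · have := List.nodup_iff_count_le_one.mp hvs v
    rw [h.degOn_eq_two_mul_count]
    omega
  · intro e he f hf x y hx hy
    exact (reachOn_symm (h.reachOn x (h.ends_subset e he x hx))).trans
      (h.reachOn y (h.ends_subset f hf y hy))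

lemma exists_isCycle_subset (h : G.Trail F a a vs es) (hes : es ≠ []) :
    ∃ C, G.IsCycle C ∧ C ⊆ F := by
  induction hn : es.length using Nat.strong_induction_on generalizing a vs es with
  | _ n ih =>
    by_cases hvs : vs.Nodup
    · exact ⟨_, h.isCycle hes hvs, h.subset⟩
    · obtain ⟨x, vs', es', h', hes', hlt⟩ := h.exists_closed_of_not_nodup hvs
      exact ih _ (hn ▸ hlt) h' hes' rfl

/-- `w` occurs in `vs` only as its last entry, so the stretch of the trail between `u` and `v`
that does not run through the end misses it. -/
lemma exists_subtrail_avoiding {w u v : G.V} (h : G.Trail F w w vs es) (hvs : vs.Nodup)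
    (hu : u ∈ vs) (hv : v ∈ vs) (huw : u ≠ w) (hvw : v ≠ w) :
    ∃ vs' es', G.Trail F u v vs' es' ∧ ∀ e ∈ es', w ∉ G.ends e := by
  obtain ⟨vs₁, vs₂, es₁, es₂, rfl, -, -, h₁, h₂⟩ := h.exists_split hu
  have hw₂ : w ∈ vs₂ := (List.mem_cons.mp h₂.end_mem_cons).resolve_left huw.symm
  rcases List.mem_append.mp hv with hv₁ | hv₂
  · obtain ⟨vs₁₁, vs₁₂, -, es₁₂, rfl, -, -, -, h₁₂⟩ := h₁.exists_split hv₁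
    have hw : w ∉ v :: vs₁₂ := by
      rintro (_ | ⟨_, hw⟩)
      · exact hvw rfl
      · exact List.disjoint_of_nodup_append hvs (List.mem_append_right vs₁₁ hw) hw₂
    obtain ⟨vs', h'⟩ := h₁₂.exists_reverse
    exact ⟨vs', _, h', fun e he => h₁₂.notMem_ends hw e (List.mem_reverse.mp he)⟩
  · obtain ⟨vs₂₁, vs₂₂, es₂₁, es₂₂, rfl, -, -, h₂₁, h₂₂⟩ := h₂.exists_split hv₂
    have hw₂₂ : w ∈ vs₂₂ := (List.mem_cons.mp h₂₂.end_mem_cons).resolve_left hvw.symm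
    have hw : w ∉ u :: vs₂₁ := by
      rintro (_ | ⟨_, hw⟩)
      · exact huw rfl
      · exact List.disjoint_of_nodup_append (List.Nodup.of_append_right hvs) hw hw₂₂
    exact ⟨vs₂₁, es₂₁, h₂₁, h₂₁.notMem_ends hw⟩

lemma exists_extension (h : G.Trail F a c vs es) :
    ∃ b vs' es', G.Trail F b c vs' es' ∧ es.length ≤ es'.length ∧
      ∀ e ∈ F, b ∈ G.ends e → e ∈ es' := by
  induction hn : (F \ {e | e ∈ es}).ncard using Nat.strong_induction_on
    generalizing a vs es with
  | _ n ih =>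
    by_cases hstuck : ∀ e ∈ F, a ∈ G.ends e → e ∈ es
    · exact ⟨a, vs, es, h, le_rfl, hstuck⟩
    push Not at hstuck
    obtain ⟨e, heF, hae, hes⟩ := hstuck
    obtain ⟨b, hends⟩ := Sym2.mem_iff_exists.mp hae
    have hlt : (F \ {f | f ∈ e :: es}).ncard < n := by
      rw [← hn]
      refine Set.ncard_lt_ncard ⟨fun f hf => ⟨hf.1, fun h' => hf.2 (List.mem_cons_of_mem _ h')⟩,
        fun hsub => (hsub ⟨heF, hes⟩).2 List.mem_cons_self⟩
    obtain ⟨b', vs', es', h', hlen, hstuck'⟩ :=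
      ih _ hlt (cons heF (hends.trans Sym2.eq_swap) hes h) rfl
    exact ⟨b', vs', es', h', (Nat.le_succ _).trans hlen, hstuck'⟩

end Trail

/-- A maximal trail ending at `u` must also start at `u`: at any other start vertex the trail
would use an odd number of the evenly many edges there. -/
lemma exists_closed_trail {F : Set G.E} (heven : ∀ v, Even (G.degOn F v)) {u : G.V}
    (hu : u ∈ G.VertexSetOf F) : ∃ vs es, G.Trail F u u vs es ∧ es ≠ [] := by
  obtain ⟨e, heF, hue⟩ := hu
  obtain ⟨x, hends⟩ := Sym2.mem_iff_exists.mp hue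
  obtain ⟨b, vs, es, h, hlen, hstuck⟩ :=
    (Trail.cons heF (hends.trans Sym2.eq_swap) List.not_mem_nil (Trail.nil u)).exists_extension
  have hdeg : G.degOn F b = G.degOn {e | e ∈ es} b :=
    congrArg Set.ncard (Set.ext fun f =>
      ⟨fun hf => ⟨hstuck f hf.1 hf.2, hf.2⟩, fun hf => ⟨h.subset f hf.1, hf.2⟩⟩)
  have hcount := h.degOn_add_ite b
  obtain ⟨k, hk⟩ := heven b
  obtain rfl : b = u := by
    by_contra hbu
    simp only [hbu, if_true, if_false] at hcount
    omega
  exact ⟨vs, es, h, List.ne_nil_of_length_pos hlen⟩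

lemma exists_isCycle_subset {F : Set G.E} (heven : ∀ v, Even (G.degOn F v)) (hF : F.Nonempty) :
    ∃ C, G.IsCycle C ∧ C ⊆ F := by
  obtain ⟨e, he⟩ := hF
  obtain ⟨vs, es, h, hes⟩ := exists_closed_trail heven ⟨e, he, Sym2.out_fst_mem _⟩
  exact h.exists_isCycle_subset hes

section Decomposition

lemma isCycleDecompOn_empty : G.IsCycleDecompOn ∅ ∅ :=
  ⟨fun _ h => h.elim, fun _ h => h.elim⟩

lemma isCycleDecompOn_singleton {C : Set G.E} (hC : G.IsCycle C) : G.IsCycleDecompOn C {C} :=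
  ⟨by rintro _ rfl; exact ⟨hC, subset_rfl⟩,
    fun _ he => ⟨C, ⟨rfl, he⟩, fun _ h => h.1⟩⟩

variable {A B : Set G.E} {D₁ D₂ : Set (Set G.E)}

lemma IsCycleDecompOn.disjoint (h₁ : G.IsCycleDecompOn A D₁) (h₂ : G.IsCycleDecompOn B D₂)
    (hAB : Disjoint A B) : Disjoint D₁ D₂ := by
  refine Set.disjoint_left.mpr fun C hC₁ hC₂ => ?_
  obtain ⟨e, he⟩ := (h₁.1 C hC₁).1.1
  exact Set.disjoint_left.mp hAB ((h₁.1 C hC₁).2 he) ((h₂.1 C hC₂).2 he)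

lemma IsCycleDecompOn.union (h₁ : G.IsCycleDecompOn A D₁) (h₂ : G.IsCycleDecompOn B D₂)
    (hAB : Disjoint A B) : G.IsCycleDecompOn (A ∪ B) (D₁ ∪ D₂) := by
  refine ⟨?_, ?_⟩
  · rintro C (hC | hC)
    · exact ⟨(h₁.1 C hC).1, (h₁.1 C hC).2.trans Set.subset_union_left⟩
    · exact ⟨(h₂.1 C hC).1, (h₂.1 C hC).2.trans Set.subset_union_right⟩
  · have hout₁ : ∀ e ∈ A, ∀ C ∈ D₂, e ∉ C := fun e he C hC he' =>
      Set.disjoint_left.mp hAB he ((h₂.1 C hC).2 he')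
    have hout₂ : ∀ e ∈ B, ∀ C ∈ D₁, e ∉ C := fun e he C hC he' =>
      Set.disjoint_right.mp hAB he ((h₁.1 C hC).2 he')
    rintro e (he | he)
    · obtain ⟨C, hC, huniq⟩ := h₁.2 e he
      refine ⟨C, ⟨Or.inl hC.1, hC.2⟩, ?_⟩
      rintro C' ⟨hC' | hC', heC'⟩
      · exact huniq C' ⟨hC', heC'⟩
      · exact absurd heC' (hout₁ e he C' hC')
    · obtain ⟨C, hC, huniq⟩ := h₂.2 e he
      refine ⟨C, ⟨Or.inr hC.1, hC.2⟩, ?_⟩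
      rintro C' ⟨hC' | hC', heC'⟩
      · exact absurd heC' (hout₂ e he C' hC')
      · exact huniq C' ⟨hC', heC'⟩

lemma IsCycleDecompOn.nonempty (h : G.IsCycleDecompOn A D₁) (hA : A.Nonempty) : D₁.Nonempty :=
  let ⟨e, he⟩ := hA
  let ⟨C, hC, _⟩ := h.2 e he
  ⟨C, hC.1⟩

/-- Each cycle of the decomposition contributes at most two edges at `v`. -/
lemma IsCycleDecompOn.degOn_le (h : G.IsCycleDecompOn A D₁) (v : G.V) :
    G.degOn A v ≤ 2 * D₁.ncard := by
  set t := (Set.toFinite D₁).toFinset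
  have hcover : {e | e ∈ A ∧ v ∈ G.ends e} ⊆ ⋃ C ∈ t, {e | e ∈ C ∧ v ∈ G.ends e} := by
    rintro e ⟨he, hve⟩
    obtain ⟨C, hC, -⟩ := h.2 e he
    exact Set.mem_biUnion ((Set.toFinite D₁).mem_toFinset.mpr hC.1) ⟨hC.2, hve⟩
  have hle_two : ∀ C ∈ t, {e | e ∈ C ∧ v ∈ G.ends e}.ncard ≤ 2 := fun C hC => by
    have := ((h.1 C ((Set.toFinite D₁).mem_toFinset.mp hC)).1.2.1 v)
    rw [degOn] at this
    omega
  calc G.degOn A v ≤ (⋃ C ∈ t, {e | e ∈ C ∧ v ∈ G.ends e}).ncard := Set.ncard_le_ncard hcover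
    _ ≤ ∑ C ∈ t, {e | e ∈ C ∧ v ∈ G.ends e}.ncard := t.set_ncard_biUnion_le _
    _ ≤ t.card • 2 := Finset.sum_le_card_nsmul _ _ _ hle_two
    _ = 2 * D₁.ncard := by rw [smul_eq_mul, mul_comm, Set.ncard_eq_toFinset_card D₁]

/-- Veblen's theorem. -/
theorem exists_isCycleDecompOn {F : Set G.E} (heven : ∀ v, Even (G.degOn F v)) :
    ∃ D, G.IsCycleDecompOn F D := by
  induction hn : F.ncard using Nat.strong_induction_on generalizing F with
  | _ n ih =>
    rcases F.eq_empty_or_nonempty with rfl | hF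
    · exact ⟨∅, isCycleDecompOn_empty⟩
    obtain ⟨C, hC, hCF⟩ := exists_isCycle_subset heven hF
    have hsplit : F = C ∪ F \ C := (Set.union_sdiff_cancel hCF).symm
    have hrest : ∀ v, Even (G.degOn (F \ C) v) := fun v => by
      have := heven v
      rw [hsplit, degOn_union Set.disjoint_sdiff_right] at this
      exact (Nat.even_add.mp this).mp (hC.even_degOn v)
    have hlt : (F \ C).ncard < n := hn ▸ Set.ncard_lt_ncard
      (Set.sdiff_ssubset_left_iff.mpr ((Set.inter_eq_right.mpr hCF).symm ▸ hC.1))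
    obtain ⟨D, hD⟩ := ih _ hlt hrest rfl
    exact ⟨{C} ∪ D, hsplit ▸ (isCycleDecompOn_singleton hC).union hD Set.disjoint_sdiff_right⟩

end Decomposition

/-- A closed trail in a cycle `C` visits each vertex at most once (degrees are at most 2), hence
uses both `C`-edges at each vertex it visits, and so, `C` being connected, all of `C`. -/
lemma IsCycle.exists_closed_trail {C : Set G.E} (hC : G.IsCycle C) {u : G.V}
    (hu : u ∈ G.VertexSetOf C) : ∃ vs es, G.Trail C u u vs es ∧ vs.Nodup ∧ ∀ e ∈ C, e ∈ es := by
  obtain ⟨vs, es, h, hes⟩ := MGraph.exists_closed_trail hC.even_degOn hu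
  have hcount : ∀ x, 2 * vs.count x ≤ 2 := fun x => by
    rw [← h.degOn_eq_two_mul_count]
    have := degOn_mono (S := {e | e ∈ es}) h.subset x
    rcases hC.2.1 x with h0 | h2 <;> omega
  have hvs : vs.Nodup := List.nodup_iff_count_le_one.mpr fun x => by linarith [hcount x]
  have hfull : ∀ x ∈ vs, ∀ e ∈ C, x ∈ G.ends e → e ∈ es := by
    intro x hx e he hxe
    have hincid : {f | f ∈ es ∧ x ∈ G.ends f} = {f | f ∈ C ∧ x ∈ G.ends f} := by
      refine Set.eq_of_subset_of_ncard_le (fun f hf => ⟨h.subset f hf.1, hf.2⟩) ?_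
      have h2 := h.degOn_eq_two_mul_count x
      rw [List.count_eq_one_of_mem hvs hx] at h2
      exact (le_of_eq (hC.degOn_eq_two ⟨e, he, hxe⟩)).trans h2.ge
    exact ((Set.ext_iff.mp hincid e).mpr ⟨he, hxe⟩).1
  have huvs : u ∈ vs := h.end_mem hes
  have hreach : ∀ y, G.ReachOn C u y → y ∈ vs := by
    intro y hy
    induction hy with
    | refl => exact huvs
    | tail _ hyz ih =>
      obtain ⟨e, he, hends⟩ := hyz
      have hz := h.ends_subset e (hfull _ ih e he (hends ▸ Sym2.mem_mk_left _ _)) _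
        (hends ▸ Sym2.mem_mk_right _ _)
      exact (List.mem_cons.mp hz).elim (· ▸ huvs) id
  obtain ⟨e₀, he₀, hue₀⟩ := hu
  refine ⟨vs, es, h, hvs, fun e he => hfull _ ?_ e he (Sym2.out_fst_mem _)⟩
  exact hreach _ (hC.2.2 e₀ he₀ e he u _ hue₀ (Sym2.out_fst_mem _))

lemma IsCycle.exists_trail_avoiding {C : Set G.E} (hC : G.IsCycle C) {u v w : G.V}
    (hu : u ∈ G.VertexSetOf C) (hv : v ∈ G.VertexSetOf C) (hw : w ∈ G.VertexSetOf C)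
    (huw : u ≠ w) (hvw : v ≠ w) :
    ∃ vs es, G.Trail C u v vs es ∧ ∀ e ∈ es, w ∉ G.ends e := by
  obtain ⟨vs, es, h, hvs, hcover⟩ := hC.exists_closed_trail hw
  have hmem : ∀ x ∈ G.VertexSetOf C, x ≠ w → x ∈ vs := fun x ⟨e, he, hxe⟩ hxw =>
    (List.mem_cons.mp (h.ends_subset e (hcover e he) x hxe)).resolve_left hxw
  exact h.exists_subtrail_avoiding hvs (hmem u hu huw) (hmem v hv hvw) huw hvw

section CycleNumbers

variable {D : Set (Set G.E)}

lemma c_le_ncard (hD : G.IsCycleDecomp D) : G.c ≤ D.ncard :=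
  Nat.sInf_le ⟨D, hD, rfl⟩

lemma exists_isCycleDecomp_ncard_eq_c (hD : G.IsCycleDecomp D) :
    ∃ D', G.IsCycleDecomp D' ∧ D'.ncard = G.c :=
  Nat.sInf_mem (s := {n | ∃ D, G.IsCycleDecompOn Set.univ D ∧ D.ncard = n}) ⟨_, D, hD, rfl⟩

lemma ncard_le_nu (hD : G.IsCycleDecomp D) : D.ncard ≤ G.nu := by
  have hbdd : BddAbove {n | ∃ D, G.IsCycleDecompOn Set.univ D ∧ D.ncard = n} :=
    ⟨Nat.card (Set G.E), by rintro _ ⟨D', -, rfl⟩; exact Set.ncard_le_card D'⟩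
  exact le_csSup hbdd ⟨D, hD, rfl⟩

lemma three_le_nu_of_even_subset {X : Set G.E} (heven : ∀ v, Even (G.deg v))
    (hX : ∀ v, Even (G.degOn X v)) (hXne : X.Nonempty) {w : G.V} (hXw : G.degOn X w = 0)
    (hw : 2 < G.deg w) : 3 ≤ G.nu := by
  have hsplit : (Set.univ : Set G.E) = X ∪ Xᶜ := (Set.union_compl_self X).symm
  have hdeg : ∀ v, G.deg v = G.degOn X v + G.degOn Xᶜ v := fun v => by
    rw [deg, hsplit, degOn_union disjoint_compl_right]
  obtain ⟨D₁, hD₁⟩ := exists_isCycleDecompOn hX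
  obtain ⟨D₂, hD₂⟩ := exists_isCycleDecompOn (F := Xᶜ) fun v =>
    (Nat.even_add.mp (hdeg v ▸ heven v)).mp (hX v)
  have h₁ : 1 ≤ D₁.ncard := (Set.ncard_pos (Set.toFinite _)).mpr (hD₁.nonempty hXne)
  have h₂ : 2 ≤ D₂.ncard := by
    have := hD₂.degOn_le w
    have := hdeg w
    omega
  have hD : G.IsCycleDecomp (D₁ ∪ D₂) := by
    rw [IsCycleDecomp, hsplit]
    exact hD₁.union hD₂ disjoint_compl_right
  calc 3 ≤ D₁.ncard + D₂.ncard := by omega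
    _ = (D₁ ∪ D₂).ncard := (Set.ncard_union_eq (hD₁.disjoint hD₂ disjoint_compl_right)).symm
    _ ≤ G.nu := ncard_le_nu hD

end CycleNumbers

end MGraph

/-- a multigraph that is the disjoint union of two edge-disjoint
cycles sharing at least three vertices has c = 2 and ν ≥ 3. -/
theorem two_cycles_sharing_three (G : MGraph) (C1 C2 : Set G.E)
    (h1 : G.IsCycle C1) (h2 : G.IsCycle C2) (hd : Disjoint C1 C2)
    (hu : C1 ∪ C2 = Set.univ)
    (hshare : 3 ≤ (G.VertexSetOf C1 ∩ G.VertexSetOf C2).ncard) :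
    G.c = 2 ∧ 3 ≤ G.nu := by
  obtain ⟨x, y, z, hx, hy, hz, hxy, hxz, hyz⟩ :=
    (Set.two_lt_ncard_iff (Set.toFinite _)).mp hshare
  have hdeg : ∀ v, G.deg v = G.degOn C1 v + G.degOn C2 v := fun v => by
    rw [MGraph.deg, ← hu, MGraph.degOn_union hd]
  have hdeg_shared : ∀ {v}, v ∈ G.VertexSetOf C1 ∩ G.VertexSetOf C2 → G.deg v = 4 := fun hv => by
    rw [hdeg, h1.degOn_eq_two hv.1, h2.degOn_eq_two hv.2]
  have hpair : G.IsCycleDecomp {C1, C2} := by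
    have := (MGraph.isCycleDecompOn_singleton h1).union (MGraph.isCycleDecompOn_singleton h2) hd
    rwa [hu, Set.singleton_union] at this
  refine ⟨le_antisymm ?_ ?_, ?_⟩
  · exact (MGraph.c_le_ncard hpair).trans (Set.ncard_pair (hd.ne h1.1.ne_empty)).le
  · obtain ⟨D, hD, hDc⟩ := MGraph.exists_isCycleDecomp_ncard_eq_c hpair
    have := hD.degOn_le x
    rw [← MGraph.deg, hdeg_shared hx] at this
    omega
  · obtain ⟨vs₁, es₁, t₁, hz₁⟩ := h1.exists_trail_avoiding hx.1 hy.1 hz.1 hxz hyz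
    obtain ⟨vs₂, es₂, t₂, hz₂⟩ := h2.exists_trail_avoiding hy.2 hx.2 hz.2 hyz hxz
    have t := (t₁.mono (Set.subset_univ _)).append (t₂.mono (Set.subset_univ _))
      fun e he₁ he₂ => Set.disjoint_left.mp hd (t₁.subset e he₁) (t₂.subset e he₂)
    obtain ⟨e, he⟩ := List.exists_mem_of_ne_nil _ (t₁.ne_nil_of_ne hxy)
    refine MGraph.three_le_nu_of_even_subset (fun v => ?_) t.even_degOn
      ⟨e, List.mem_append_left _ he⟩ (MGraph.degOn_eq_zero fun f hf => ?_)
      (by rw [hdeg_shared hz]; norm_num)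
    · rw [hdeg]
      exact (h1.even_degOn v).add (h2.even_degOn v)
    · rcases List.mem_append.mp hf with hf | hf
      exacts [hz₁ f hf, hz₂ f hf]
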